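/- (Sylvester–Franke theorem, determinant form.) Let ρ be an m×m matrix with complex entries and let 1 ≤ l ≤ m. Then the determinant of the l-th compound matrix of ρ, namely the C(m,l)×C(m,l) matrix [det ρ^{(μ,ν)}] indexed by multi-indices 1 ≤ μ_1 < … < μ_l ≤ m and 1 ≤ ν_1 < … < ν_l ≤ m arranged in the same (e.g. lexicographical) ordering for rows and columns, equals (det ρ)^{C(m−1,l−1)}. -/

import Mathlib

open Matrix Finset Equiv

variable {R : Type*} [CommRing R] {l m : ℕ}

local notation "ε" σ => ((Equiv.Perm.sign σ : ℤ) : R)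

private theorem cb_aux {A : Matrix (Fin l) (Fin m) R} {B : Matrix (Fin m) (Fin l) R}
    {p : Fin l → Fin m} (H : ¬Function.Injective p) :
    (∑ σ : Perm (Fin l), (ε σ) * ∏ x, A (σ x) (p x) * B (p x) x) = 0 := by
  obtain ⟨i, j, hpij, hij⟩ : ∃ i j, p i = p j ∧ i ≠ j := by
    rw [Function.Injective] at H
    push_neg at H
    obtain ⟨i, j, h1, h2⟩ := H
    exact ⟨i, j, h1, h2⟩
  exact
    sum_involution (fun σ _ => σ * Equiv.swap i j)
      (fun σ _ => by
        have : (∏ x, A (σ x) (p x)) = ∏ x, A ((σ * Equiv.swap i j) x) (p x) :=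
          Fintype.prod_equiv (swap i j) _ _ (by simp [apply_swap_eq_self hpij])
        simp [this, Equiv.Perm.sign_swap hij, -Equiv.Perm.sign_swap', prod_mul_distrib])
      (fun σ _ _ => (not_congr mul_swap_eq_iff).mpr hij) (fun _ _ => mem_univ _)
      fun σ _ => mul_swap_involutive i j σ

private theorem det_mul_expand (M N : Matrix (Fin l) (Fin l) R) :
    ∑ τ : Perm (Fin l), ∑ σ : Perm (Fin l), (ε σ) * ∏ i, M (σ i) (τ i) * N (τ i) i
      = det M * det N :=
  calc
    ∑ τ : Perm (Fin l), ∑ σ : Perm (Fin l), (ε σ) * ∏ i, M (σ i) (τ i) * N (τ i) i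
        = ∑ σ : Perm (Fin l), ∑ τ : Perm (Fin l),
            (∏ i, N (σ i) i) * (ε τ) * ∏ j, M (τ j) (σ j) := by
      simp only [mul_comm, mul_left_comm, prod_mul_distrib, mul_assoc]
    _ = ∑ σ : Perm (Fin l), ∑ τ : Perm (Fin l),
            (∏ i, N (σ i) i) * ((ε σ) * (ε τ)) * ∏ i, M (τ i) i :=
      (sum_congr rfl fun σ _ =>
        Fintype.sum_equiv (Equiv.mulRight σ⁻¹) _ _ fun τ => by
          have : (∏ j, M (τ j) (σ j)) = ∏ j, M ((τ * σ⁻¹) j) j := by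
            rw [← (σ⁻¹ : _ ≃ _).prod_comp]
            simp only [Equiv.Perm.coe_mul, Equiv.Perm.coe_inv, Equiv.apply_symm_apply, Function.comp_apply]
          have h : (ε σ) * (ε (τ * σ⁻¹)) = (ε τ) :=
            calc
              (ε σ) * (ε (τ * σ⁻¹)) = ε (τ * σ⁻¹ * σ) := by
                rw [mul_comm, Equiv.Perm.sign_mul (τ * σ⁻¹)]
                simp only [Int.cast_mul, Units.val_mul]
              _ = ε τ := by simp only [inv_mul_cancel_right]
          simp_rw [Equiv.coe_mulRight, h]
          simp only [this])
    _ = det M * det N := by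
      simp only [det_apply', Finset.mul_sum, mul_comm, mul_left_comm, mul_assoc]

/-- The image of an injective `p : Fin l → Fin m` as an `l`-element subset. -/
private def imgSet (p : Fin l → Fin m) (hp : Function.Injective p) :
    {s : Finset (Fin m) // s.card = l} :=
  ⟨Finset.image p Finset.univ, by
    rw [Finset.card_image_of_injective _ hp, Finset.card_univ, Fintype.card_fin]⟩

/-- The permutation such that `p = orderEmbOfFin (imgSet p) ∘ permOf p`. -/
private noncomputable def permOf (p : Fin l → Fin m) (hp : Function.Injective p) : Perm (Fin l) :=
  Equiv.ofBijective
    (fun i => ((imgSet p hp).1.orderIsoOfFin (imgSet p hp).2).symm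
      ⟨p i, Finset.mem_image_of_mem p (mem_univ i)⟩)
    (by
      have hinj : Function.Injective (fun i =>
          ((imgSet p hp).1.orderIsoOfFin (imgSet p hp).2).symm
            ⟨p i, Finset.mem_image_of_mem p (mem_univ i)⟩) := by
        intro a b hab
        have := congrArg ((imgSet p hp).1.orderIsoOfFin (imgSet p hp).2) hab
        simp only [OrderIso.apply_symm_apply, Subtype.mk.injEq] at this
        exact hp (congrArg Subtype.val this)
      exact Finite.injective_iff_bijective.mp hinj)

private theorem orderEmbOfFin_permOf (p : Fin l → Fin m) (hp : Function.Injective p)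
    (i : Fin l) :
    (imgSet p hp).1.orderEmbOfFin (imgSet p hp).2 (permOf p hp i) = p i := by
  rw [permOf, Equiv.ofBijective_apply, ← Finset.coe_orderIsoOfFin_apply,
    OrderIso.apply_symm_apply]

private theorem imgSet_comp (x : {s : Finset (Fin m) // s.card = l} × Perm (Fin l))
    (hp : Function.Injective ((x.1.1.orderEmbOfFin x.1.2) ∘ x.2)) :
    imgSet ((x.1.1.orderEmbOfFin x.1.2) ∘ x.2) hp = x.1 := by
  apply Subtype.ext
  apply Finset.eq_of_subset_of_card_le
  · intro a ha
    simp only [imgSet, Finset.mem_image, Function.comp_apply] at ha ⊢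
    obtain ⟨i, -, rfl⟩ := ha
    exact Finset.orderEmbOfFin_mem _ _ _
  · rw [x.1.2, (imgSet _ hp).2]

private theorem permOf_comp (x : {s : Finset (Fin m) // s.card = l} × Perm (Fin l))
    (hp : Function.Injective ((x.1.1.orderEmbOfFin x.1.2) ∘ x.2)) :
    permOf ((x.1.1.orderEmbOfFin x.1.2) ∘ x.2) hp = x.2 := by
  apply Equiv.ext
  intro i
  have key := orderEmbOfFin_permOf ((x.1.1.orderEmbOfFin x.1.2) ∘ x.2) hp i
  rw [imgSet_comp x hp] at key
  exact (x.1.1.orderEmbOfFin x.1.2).injective key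

private theorem cauchyBinet (A : Matrix (Fin l) (Fin m) R) (B : Matrix (Fin m) (Fin l) R) :
    det (A * B) = ∑ s : {s : Finset (Fin m) // s.card = l},
      det (A.submatrix id (s.1.orderEmbOfFin s.2)) *
        det (B.submatrix (s.1.orderEmbOfFin s.2) id) :=
  calc
    det (A * B)
        = ∑ p : Fin l → Fin m, ∑ σ : Perm (Fin l),
            (ε σ) * ∏ i, A (σ i) (p i) * B (p i) i := by
      simp only [det_apply', Matrix.mul_apply, prod_univ_sum, mul_sum, Fintype.piFinset_univ]
      rw [Finset.sum_comm]
    _ = ∑ p ∈ univ.filter fun p : Fin l → Fin m => Function.Injective p,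
          ∑ σ : Perm (Fin l), (ε σ) * ∏ i, A (σ i) (p i) * B (p i) i := by
      refine (sum_subset (filter_subset _ _) fun f _ hinj => cb_aux ?_).symm
      simpa using hinj
    _ = ∑ x : {s : Finset (Fin m) // s.card = l} × Perm (Fin l),
          ∑ σ : Perm (Fin l), (ε σ) * ∏ i,
            A (σ i) (x.1.1.orderEmbOfFin x.1.2 (x.2 i)) *
              B (x.1.1.orderEmbOfFin x.1.2 (x.2 i)) i := by
      refine Finset.sum_bij'
        (fun p hp => (imgSet p (by simpa using hp), permOf p (by simpa using hp)))
        (fun x _ => (x.1.1.orderEmbOfFin x.1.2) ∘ x.2) (fun _ _ => mem_univ _)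
        (fun x _ => mem_filter.mpr ⟨mem_univ _,
          (x.1.1.orderEmbOfFin x.1.2).injective.comp x.2.injective⟩)
        (fun p hp => ?_) (fun x hx => ?_) (fun p hp => ?_)
      · funext i
        exact orderEmbOfFin_permOf p (by simpa using hp) i
      · have hinj : Function.Injective ((x.1.1.orderEmbOfFin x.1.2) ∘ x.2) :=
          (x.1.1.orderEmbOfFin x.1.2).injective.comp x.2.injective
        exact Prod.ext (imgSet_comp x hinj) (permOf_comp x hinj)
      · simp only [orderEmbOfFin_permOf p (by simpa using hp)]
    _ = ∑ s : {s : Finset (Fin m) // s.card = l},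
          det (A.submatrix id (s.1.orderEmbOfFin s.2)) *
            det (B.submatrix (s.1.orderEmbOfFin s.2) id) := by
      rw [Fintype.sum_prod_type]
      refine Finset.sum_congr rfl fun s _ => ?_
      exact det_mul_expand (A.submatrix id (s.1.orderEmbOfFin s.2))
        (B.submatrix (s.1.orderEmbOfFin s.2) id)

/-- The `l`-th compound matrix. -/
private def cpd (l : ℕ) (A : Matrix (Fin m) (Fin m) R) :
    Matrix {s : Finset (Fin m) // s.card = l} {s : Finset (Fin m) // s.card = l} R :=
  of fun μ ν => (A.submatrix (μ.1.orderEmbOfFin μ.2) (ν.1.orderEmbOfFin ν.2)).det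

private theorem cpd_mul (l : ℕ) (A B : Matrix (Fin m) (Fin m) R) :
    cpd l (A * B) = cpd l A * cpd l B := by
  ext μ ν
  rw [Matrix.mul_apply]
  show ((A * B).submatrix (μ.1.orderEmbOfFin μ.2) (ν.1.orderEmbOfFin ν.2)).det = _
  rw [show (A * B).submatrix (μ.1.orderEmbOfFin μ.2) (ν.1.orderEmbOfFin ν.2)
      = A.submatrix (μ.1.orderEmbOfFin μ.2) id * B.submatrix id (ν.1.orderEmbOfFin ν.2) by
    exact Matrix.submatrix_mul A B _ id _ Function.bijective_id]
  rw [cauchyBinet]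
  refine Finset.sum_congr rfl fun s _ => ?_
  simp [cpd, Matrix.submatrix_submatrix]

private theorem cpd_diagonal (l : ℕ) (d : Fin m → R) :
    cpd l (diagonal d) =
      diagonal (fun μ : {s : Finset (Fin m) // s.card = l} => ∏ i ∈ μ.1, d i) := by
  ext μ ν
  by_cases h : μ = ν
  · subst h
    rw [diagonal_apply_eq]
    show ((diagonal d).submatrix _ _).det = _
    rw [Matrix.submatrix_diagonal d _ (μ.1.orderEmbOfFin μ.2).injective, det_diagonal]
    have himg : Finset.image (μ.1.orderEmbOfFin μ.2) univ = μ.1 := by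
      apply Finset.eq_of_subset_of_card_le
      · intro a ha
        obtain ⟨b, -, rfl⟩ := Finset.mem_image.mp ha
        exact Finset.orderEmbOfFin_mem _ _ _
      · rw [μ.2, Finset.card_image_of_injective _ (μ.1.orderEmbOfFin μ.2).injective,
          Finset.card_univ, Fintype.card_fin]
    conv_rhs => rw [← himg]
    rw [Finset.prod_image (fun a _ b _ hab => (μ.1.orderEmbOfFin μ.2).injective hab)]
    rfl
  · rw [diagonal_apply_ne _ (fun hc => h hc)]
    obtain ⟨i, hiμ, hiν⟩ : ∃ i, i ∈ μ.1 ∧ i ∉ ν.1 := by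
      by_contra hc
      push_neg at hc
      exact h (Subtype.ext (Finset.eq_of_subset_of_card_le hc (by rw [μ.2, ν.2])))
    obtain ⟨a, ha⟩ : ∃ a, μ.1.orderEmbOfFin μ.2 a = i := by
      have := Finset.range_orderEmbOfFin μ.1 μ.2
      exact Set.mem_range.mp (by rw [this]; exact_mod_cast hiμ)
    apply det_eq_zero_of_row_eq_zero a
    intro b
    apply diagonal_apply_ne'
    intro hc
    apply hiν
    rw [← ha, ← hc]
    exact Finset.orderEmbOfFin_mem _ _ _

private theorem count_subsets (hl : 1 ≤ l) (i : Fin m) :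
    (univ.filter fun μ : {s : Finset (Fin m) // s.card = l} => i ∈ μ.1).card
      = Nat.choose (m - 1) (l - 1) := by
  have : (univ.filter fun μ : {s : Finset (Fin m) // s.card = l} => i ∈ μ.1).card
      = ((univ.erase i).powersetCard (l - 1)).card := by
    refine Finset.card_bij' (fun μ _ => μ.1.erase i)
      (fun t ht => ⟨insert i t, ?_⟩) ?_ ?_ ?_ ?_
    · rw [Finset.mem_powersetCard] at ht
      rw [Finset.card_insert_of_notMem (fun hc => (Finset.mem_erase.mp (ht.1 hc)).1 rfl),
        ht.2, Nat.sub_add_cancel hl]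
    · intro μ hμ
      rw [Finset.mem_powersetCard]
      rw [Finset.mem_filter] at hμ
      exact ⟨Finset.erase_subset_erase _ (Finset.subset_univ _),
        by rw [Finset.card_erase_of_mem hμ.2, μ.2]⟩
    · intro t ht
      simp only [Finset.mem_filter, Finset.mem_univ, true_and]
      exact Finset.mem_insert_self _ _
    · intro μ hμ
      rw [Finset.mem_filter] at hμ
      exact Subtype.ext (Finset.insert_erase hμ.2)
    · intro t ht
      rw [Finset.mem_powersetCard] at ht
      exact Finset.erase_insert (fun hc => (Finset.mem_erase.mp (ht.1 hc)).1 rfl)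
  rw [this, Finset.card_powersetCard, Finset.card_erase_of_mem (Finset.mem_univ _),
    Finset.card_univ, Fintype.card_fin]

private theorem det_cpd_diagonal (hl : 1 ≤ l) (d : Fin m → R) :
    det (cpd l (diagonal d)) = det (diagonal d) ^ Nat.choose (m - 1) (l - 1) := by
  rw [cpd_diagonal, det_diagonal, det_diagonal, ← Finset.prod_pow]
  have : ∀ μ : {s : Finset (Fin m) // s.card = l},
      ∏ i ∈ μ.1, d i = ∏ i : Fin m, if i ∈ μ.1 then d i else 1 := by
    intro μ
    rw [← Finset.prod_filter, Finset.filter_univ_mem]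
  simp_rw [this]
  rw [Finset.prod_comm]
  refine Finset.prod_congr rfl fun i _ => ?_
  rw [← Finset.prod_filter, Finset.prod_const, count_subsets hl]

private theorem cpd_one (l : ℕ) : cpd l (1 : Matrix (Fin m) (Fin m) R) = 1 := by
  rw [show (1 : Matrix (Fin m) (Fin m) R) = diagonal (fun _ => 1) from (diagonal_one).symm,
    cpd_diagonal]
  simp [diagonal_one]

private theorem cpd_map {S : Type*} [CommRing S] (l : ℕ) (f : R →+* S)
    (A : Matrix (Fin m) (Fin m) R) :
    cpd l (A.map f) = (cpd l A).map f := by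
  ext μ ν
  show ((A.map f).submatrix _ _).det = f (((A.submatrix _ _)).det)
  rw [RingHom.map_det]
  congr 1

private theorem det_cpd_transvection (l : ℕ) {i j : Fin m} (hij : i ≠ j) (c : ℂ) :
    det (cpd l (Matrix.transvection i j c)) = 1 := by
  classical
  set p : Polynomial ℂ :=
    det (cpd l (Matrix.transvection i j (Polynomial.X : Polynomial ℂ))) with hp
  have hmapT : ∀ c : ℂ, (Matrix.transvection i j (Polynomial.X : Polynomial ℂ)).map
      (Polynomial.evalRingHom c) = Matrix.transvection i j c := by
    intro c
    ext a b
    simp [Matrix.transvection, Matrix.map_apply, Matrix.add_apply, Matrix.one_apply,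
      Matrix.single, apply_ite (Polynomial.eval c)]
  have heval : ∀ c : ℂ, p.eval c = det (cpd l (Matrix.transvection i j c)) := by
    intro c
    have h1 : p.eval c = (Polynomial.evalRingHom c) p := rfl
    rw [h1, hp, RingHom.map_det, RingHom.mapMatrix_apply, ← cpd_map, hmapT]
  have hne : ∀ c : ℂ, p.eval c ≠ 0 := by
    intro c
    have hmul : det (cpd l (Matrix.transvection i j c)) *
        det (cpd l (Matrix.transvection i j (-c))) = 1 := by
      rw [← det_mul, ← cpd_mul, Matrix.transvection_mul_transvection_same (h := hij),
        add_neg_cancel, Matrix.transvection_zero, cpd_one, det_one]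
    rw [heval]
    intro h0
    rw [h0, zero_mul] at hmul
    exact zero_ne_one hmul
  have hdeg : p.degree ≤ 0 := by
    by_contra hd
    push_neg at hd
    obtain ⟨z, hz⟩ := Complex.exists_root hd
    exact hne z hz
  have hC : p = Polynomial.C (p.coeff 0) := Polynomial.eq_C_of_degree_le_zero hdeg
  have h0 : p.eval 0 = 1 := by
    rw [heval, Matrix.transvection_zero, cpd_one, det_one]
  rw [← heval c, hC, Polynomial.eval_C]
  rw [hC, Polynomial.eval_C] at h0
  exact h0

/-- **Sylvester–Franke theorem, determinant form.** For an `m × m` complex matrix `ρ`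
and `1 ≤ l ≤ m`, the determinant of the `l`-th compound matrix of `ρ` — the
`C(m,l) × C(m,l)` matrix indexed by the `l`-element subsets of `Fin m` (which encode
the strictly increasing multi-indices, with the same ordering for rows and columns),
whose `(μ,ν)` entry is the minor `det ρ^{(μ,ν)}` — equals `(det ρ)^{C(m-1,l-1)}`. -/
theorem stmt_9 (m l : ℕ) (hl : 1 ≤ l) (hlm : l ≤ m)
    (ρ : Matrix (Fin m) (Fin m) ℂ) :
    (Matrix.of fun (μ ν : {s : Finset (Fin m) // s.card = l}) =>
      (ρ.submatrix (μ.1.orderEmbOfFin μ.2) (ν.1.orderEmbOfFin ν.2)).det).det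
      = ρ.det ^ Nat.choose (m - 1) (l - 1) := by
  show det (cpd l ρ) = _
  refine Matrix.diagonal_transvection_induction
    (fun M => det (cpd l M) = det M ^ Nat.choose (m - 1) (l - 1)) ρ
    (fun D _ => det_cpd_diagonal hl D) (fun t => ?_) (fun A B hA hB => ?_)
  · show det (cpd l t.toMatrix) = det t.toMatrix ^ Nat.choose (m - 1) (l - 1)
    rw [Matrix.TransvectionStruct.det, one_pow]
    exact det_cpd_transvection l t.hij t.c
  · show det (cpd l (A * B)) = det (A * B) ^ Nat.choose (m - 1) (l - 1)
    rw [cpd_mul, det_mul, hA, hB, det_mul, mul_pow]
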